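/- For n ≥ 1, every Dyck n-path with terminal descent of even length (≥ 2) and k ≥ 1 even-length descents to ground level decomposes uniquely, by cutting at its even-length descents to ground level, into a concatenation of k nonempty Dyck paths each having terminal descent of even length and all other descents to ground level of odd length. -/

import Mathlib

/-!
Cutting a Dyck path right after a non-terminal even descent to ground level gives two shorter
Dyck paths with even terminal descents, and the even ground descents of the path are exactly
those of the two parts. Repeating this ends with blocks whose only even ground descent is the
terminal one, so there are as many blocks as even ground descents. The cut is forced: a block
cannot be a proper prefix of another, as its terminal descent would then be an even non-terminal
ground descent of the longer block.
-/

inductive Step : Type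
  | U : Step
  | D : Step
deriving DecidableEq

open Step

/-- The path stays weakly above ground level: every prefix has at least as many `U`s as `D`s. -/
def NonnegPrefixes (p : List Step) : Prop :=
  ∀ q : List Step, q <+: p → q.count D ≤ q.count U

/-- A Dyck path: equally many upsteps and downsteps, never dipping below ground level. -/
def IsDyck (p : List Step) : Prop :=
  p.count U = p.count D ∧ NonnegPrefixes p

/-- A Dyck `n`-path: a Dyck path with `n` upsteps (semilength `n`). -/
def IsDyckN (n : ℕ) (p : List Step) : Prop :=
  IsDyck p ∧ p.count U = n

/-- Length of the terminal descent (maximal final run of downsteps). -/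
def termDesc (p : List Step) : ℕ :=
  (p.reverse.takeWhile (fun s => s == D)).length

/-- Number of returns: downsteps that bring the path back to ground level. -/
def returnCount (p : List Step) : ℕ :=
  ((List.range p.length).filter
    (fun i => (p.take (i+1)).count U == (p.take (i+1)).count D)).length

/-- `GroundDescent p q m r` : `p = q ++ D^m ++ r` is a maximal run of `m ≥ 1` downsteps
ending at ground level. -/
def GroundDescent (p q : List Step) (m : ℕ) (r : List Step) : Prop :=
  p = q ++ List.replicate m D ++ r ∧ 1 ≤ m ∧
  q.getLast? ≠ some D ∧ r.head? ≠ some D ∧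
  q.count U = q.count D + m

/-- All descents to ground level other than the terminal one have odd length. -/
def OddNonterminalGroundDescents (p : List Step) : Prop :=
  ∀ q m r, GroundDescent p q m r → r ≠ [] → Odd m

/-- No occurrence of `UD` starting at ground level. -/
def HillFree (p : List Step) : Prop :=
  ∀ q r : List Step, p = q ++ [U, D] ++ r → q.count U ≠ q.count D

/-- No occurrence of `UDU` starting at ground level. -/
def EarlyHillFree (p : List Step) : Prop :=
  ∀ q r : List Step, p = q ++ [U, D, U] ++ r → q.count U ≠ q.count D

/-- Number of early hills: occurrences of `UDU` starting at ground level. -/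
def earlyHillCount (p : List Step) : ℕ :=
  ((List.range p.length).filter
    (fun i => decide ((p.take i).count U = (p.take i).count D ∧
      (p.drop i).take 3 = [U, D, U]))).length

/-- Number of even-length descents to ground level of `p`. -/
noncomputable def evenGroundDescentCount (p : List Step) : ℕ :=
  Nat.card {x : List Step × ℕ × List Step //
    GroundDescent p x.1 x.2.1 x.2.2 ∧ Even x.2.1}

def IsEvenBlock (P : List Step) : Prop :=
  IsDyck P ∧ P ≠ [] ∧ Even (termDesc P) ∧ OddNonterminalGroundDescents P

def evenGroundDescents (p : List Step) : Set (List Step × ℕ × List Step) :=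
  {x | GroundDescent p x.1 x.2.1 x.2.2 ∧ Even x.2.1}

theorem evenGroundDescentCount_eq_ncard (p : List Step) :
    evenGroundDescentCount p = (evenGroundDescents p).ncard :=
  Nat.card_coe_set_eq _

theorem termDesc_append_U (l : List Step) : termDesc (l ++ [U]) = 0 := by
  simp [termDesc]

theorem termDesc_append_D (l : List Step) : termDesc (l ++ [D]) = termDesc l + 1 := by
  simp [termDesc]

theorem termDesc_append_of_mem {a b : List Step} (hb : U ∈ b) :
    termDesc (a ++ b) = termDesc b := by
  induction b using List.reverseRecOn with
  | nil => simp at hb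
  | append_singleton l s ih =>
    cases s with
    | U => simp only [← List.append_assoc, termDesc_append_U]
    | D =>
      have hl : U ∈ l := by simpa using hb
      rw [← List.append_assoc, termDesc_append_D, termDesc_append_D, ih hl]

theorem termDesc_append_replicate {q : List Step} (hq : q.getLast? ≠ some D) (m : ℕ) :
    termDesc (q ++ List.replicate m D) = m := by
  induction m with
  | zero =>
    rcases List.eq_nil_or_concat' q with rfl | ⟨l, s, rfl⟩
    · rfl
    · cases s with
      | U => simp [termDesc_append_U]
      | D => simp at hq
  | succ m ih => rw [List.replicate_succ', ← List.append_assoc, termDesc_append_D, ih]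

theorem exists_eq_append_replicate_termDesc (p : List Step) :
    ∃ q, p = q ++ List.replicate (termDesc p) D ∧ q.getLast? ≠ some D := by
  induction p using List.reverseRecOn with
  | nil => exact ⟨[], rfl, by simp⟩
  | append_singleton l s ih =>
    cases s with
    | U => exact ⟨l ++ [U], by simp [termDesc_append_U], by simp⟩
    | D =>
      obtain ⟨q, hl, hq⟩ := ih
      refine ⟨q, ?_, hq⟩
      rw [termDesc_append_D, List.replicate_succ', ← List.append_assoc, ← hl]

namespace IsDyck

theorem of_append {a b : List Step} (h : IsDyck (a ++ b)) (ha : a.count U = a.count D) :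
    IsDyck a ∧ IsDyck b := by
  refine ⟨⟨ha, fun q hq => h.2 q (hq.trans (List.prefix_append a b))⟩, ?_, fun q hq => ?_⟩
  · have := h.1
    simp only [List.count_append] at this
    omega
  · have := h.2 (a ++ q) ((List.prefix_append_right_inj a).mpr hq)
    simp only [List.count_append] at this
    omega

theorem head?_eq {p : List Step} (h : IsDyck p) (hne : p ≠ []) : p.head? = some U := by
  obtain ⟨s, t, rfl⟩ := List.exists_cons_of_ne_nil hne
  cases s
  · rfl
  · have := h.2 [D] ⟨t, rfl⟩
    simp at this

theorem getLast?_eq {p : List Step} (h : IsDyck p) (hne : p ≠ []) : p.getLast? = some D := by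
  obtain ⟨t, s, rfl⟩ := (List.eq_nil_or_concat' p).resolve_left hne
  cases s
  · have h1 := h.2 t (List.prefix_append t [U])
    have h2 := h.1
    simp [List.count_append] at h2
    omega
  · simp

theorem exists_groundDescent_termDesc {p : List Step} (h : IsDyck p) (hne : p ≠ []) :
    ∃ q, GroundDescent p q (termDesc p) [] := by
  obtain ⟨q, hp, hq⟩ := exists_eq_append_replicate_termDesc p
  refine ⟨q, by simpa using hp, ?_, hq, by simp, ?_⟩
  · by_contra h0
    rw [Nat.lt_one_iff.mp (not_le.mp h0), List.replicate_zero, List.append_nil] at hp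
    exact hq (hp ▸ h.getLast?_eq hne)
  · have := h.1
    rw [hp] at this
    simp [List.count_append, List.count_replicate] at this
    omega

end IsDyck

namespace GroundDescent

variable {p q r : List Step} {m : ℕ}

theorem prefix_ne_nil (h : GroundDescent p q m r) : q ≠ [] := by
  rintro rfl
  have := h.2.2.2.2
  have := h.2.1
  simp at *
  omega

theorem append_right (h : GroundDescent p q m r) {b : List Step} (hb : b.head? ≠ some D) :
    GroundDescent (p ++ b) q m (r ++ b) := by
  obtain ⟨rfl, hm, hq, hr, hc⟩ := h
  refine ⟨by simp, hm, hq, ?_, hc⟩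
  cases r with
  | nil => simpa
  | cons s r => simpa using hr

theorem append_left (h : GroundDescent p q m r) {a : List Step} (ha : a.count U = a.count D) :
    GroundDescent (a ++ p) (a ++ q) m r := by
  have hq := h.prefix_ne_nil
  obtain ⟨rfl, hm, hql, hr, hc⟩ := h
  refine ⟨by simp, hm, by rwa [List.getLast?_append_of_ne_nil _ hq], hr, ?_⟩
  simp only [List.count_append]
  omega

theorem of_append {a b : List Step} (h : GroundDescent (a ++ b) q m r)
    (ha : a.count U = a.count D) (hlast : a.getLast? = some D) (hhead : b.head? = some U) :
    (∃ r', r = r' ++ b ∧ GroundDescent a q m r') ∨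
      (∃ q', q = a ++ q' ∧ GroundDescent b q' m r) := by
  obtain ⟨hp, hm, hq, hr, hc⟩ := h
  rw [List.append_assoc] at hp
  rcases List.append_eq_append_iff.mp hp with ⟨q', rfl, hb⟩ | ⟨c, rfl, hc'⟩
  · have hq' : q' ≠ [] := by
      rintro rfl
      simp_all
    right
    refine ⟨q', rfl, by rw [hb, List.append_assoc], hm, ?_, hr, ?_⟩
    · rwa [List.getLast?_append_of_ne_nil _ hq'] at hq
    · simp only [List.count_append] at hc
      omega
  · rcases List.append_eq_append_iff.mp hc' with ⟨x, rfl, rfl⟩ | ⟨y, hy, rfl⟩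
    · left
      refine ⟨x, rfl, by rw [List.append_assoc], hm, hq, ?_, hc⟩
      cases x with
      | nil => simp
      | cons s x => simpa using hr
    · cases y with
      | nil =>
        left
        refine ⟨[], rfl, by simp [hy], hm, hq, by simp, hc⟩
      | cons s y =>
        have hs : s ∈ List.replicate m D := by simp [hy]
        simp [List.eq_of_mem_replicate hs] at hhead

end GroundDescent

theorem finite_evenGroundDescents (p : List Step) : (evenGroundDescents p).Finite := by
  refine (p.inits.toFinset ×ˢ (Finset.range (p.length + 1) ×ˢ p.tails.toFinset)).finite_toSet.subset
    ?_
  rintro ⟨q, m, r⟩ ⟨⟨rfl, -⟩, -⟩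
  simp only [Finset.coe_product, Set.mem_prod, List.coe_toFinset, Set.mem_ofPred_eq,
    List.mem_inits, List.mem_tails, Finset.coe_range, Set.mem_Iio]
  refine ⟨List.prefix_append_of_prefix (List.prefix_append _ _), ?_, List.suffix_append _ _⟩
  simp only [List.length_append, List.length_replicate]
  omega

theorem evenGroundDescentCount_nil : evenGroundDescentCount [] = 0 := by
  rw [evenGroundDescentCount_eq_ncard, Set.ncard_eq_zero (finite_evenGroundDescents [])]
  refine Set.eq_empty_of_forall_notMem ?_
  rintro ⟨q, m, r⟩ ⟨⟨hp, hm, -⟩, -⟩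
  simp only [List.nil_eq, List.append_eq_nil_iff, List.replicate_eq_nil_iff] at hp
  exact absurd hp.1.2 (Nat.one_le_iff_ne_zero.mp hm)

theorem evenGroundDescents_append {a b : List Step} (ha : IsDyck a) (hane : a ≠ [])
    (hb : IsDyck b) (hbne : b ≠ []) :
    evenGroundDescents (a ++ b) =
      (fun x => (x.1, x.2.1, x.2.2 ++ b)) '' evenGroundDescents a ∪
        (fun x => (a ++ x.1, x.2.1, x.2.2)) '' evenGroundDescents b := by
  ext ⟨q, m, r⟩
  constructor
  · rintro ⟨hg, hev⟩
    rcases hg.of_append ha.1 (ha.getLast?_eq hane) (hb.head?_eq hbne) with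
      ⟨r', rfl, hg'⟩ | ⟨q', rfl, hg'⟩
    · exact Or.inl ⟨(q, m, r'), ⟨hg', hev⟩, rfl⟩
    · exact Or.inr ⟨(q', m, r), ⟨hg', hev⟩, rfl⟩
  · rintro (⟨⟨q', m', r'⟩, ⟨hg, hev⟩, he⟩ | ⟨⟨q', m', r'⟩, ⟨hg, hev⟩, he⟩) <;>
      simp only [Prod.mk.injEq] at he <;> obtain ⟨rfl, rfl, rfl⟩ := he
    · exact ⟨hg.append_right (by simp [hb.head?_eq hbne]), hev⟩
    · exact ⟨hg.append_left ha.1, hev⟩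

theorem evenGroundDescentCount_append {a b : List Step} (ha : IsDyck a) (hane : a ≠ [])
    (hb : IsDyck b) (hbne : b ≠ []) :
    evenGroundDescentCount (a ++ b) = evenGroundDescentCount a + evenGroundDescentCount b := by
  have hdisj : Disjoint ((fun x => (x.1, x.2.1, x.2.2 ++ b)) '' evenGroundDescents a)
      ((fun x => (a ++ x.1, x.2.1, x.2.2)) '' evenGroundDescents b) := by
    rw [Set.disjoint_left]
    rintro _ ⟨⟨q, m, r⟩, ⟨⟨rfl, hm, -⟩, -⟩, rfl⟩ ⟨⟨q', m', r'⟩, -, he⟩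
    have := congrArg List.length (Prod.mk.inj he).1
    simp only [List.length_append, List.length_replicate] at this hm
    omega
  rw [evenGroundDescentCount_eq_ncard, evenGroundDescents_append ha hane hb hbne,
    Set.ncard_union_eq hdisj ((finite_evenGroundDescents a).image _)
      ((finite_evenGroundDescents b).image _),
    Set.ncard_image_of_injective _ ?_, Set.ncard_image_of_injective _ ?_,
    evenGroundDescentCount_eq_ncard, evenGroundDescentCount_eq_ncard]
  all_goals
    rintro ⟨q, m, r⟩ ⟨q', m', r'⟩ he
    simp_all

namespace IsEvenBlock

theorem evenGroundDescentCount_eq_one {P : List Step} (h : IsEvenBlock P) :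
    evenGroundDescentCount P = 1 := by
  obtain ⟨q, hq⟩ := h.1.exists_groundDescent_termDesc h.2.1
  rw [evenGroundDescentCount_eq_ncard, Set.ncard_eq_one]
  refine ⟨(q, termDesc P, []), Set.ext fun ⟨q', m, r⟩ => ⟨?_, ?_⟩⟩
  · rintro ⟨hg, hev⟩
    obtain rfl : r = [] := by
      by_contra hr
      exact Nat.not_odd_iff_even.mpr hev (h.2.2.2 _ _ _ hg hr)
    have hm : termDesc P = m := by
      rw [hg.1, List.append_nil, termDesc_append_replicate hg.2.2.1]
    subst hm
    have hqq' : q = q' := by simpa using hq.1.symm.trans hg.1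
    rw [hqq']
    rfl
  · rintro ⟨⟩
    exact ⟨hq, h.2.2.1⟩

theorem eq_of_prefix {P P' : List Step} (hP : IsEvenBlock P) (hP' : IsEvenBlock P')
    (h : P <+: P') : P = P' := by
  obtain ⟨t, rfl⟩ := h
  by_contra ht
  replace ht : t ≠ [] := by simpa using ht
  have hthead := (hP'.1.of_append hP.1.1).2.head?_eq ht
  obtain ⟨q, hq⟩ := hP.1.exists_groundDescent_termDesc hP.2.1
  have hodd := hP'.2.2.2 _ _ _ (hq.append_right (by simp [hthead])) (by simpa using ht)
  exact Nat.not_odd_iff_even.mpr hP.2.2.1 hodd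

end IsEvenBlock

theorem eq_of_flatten_eq_of_isEvenBlock :
    ∀ {L L' : List (List Step)}, (∀ P ∈ L, IsEvenBlock P) → (∀ P ∈ L', IsEvenBlock P) →
      L.flatten = L'.flatten → L = L'
  | [], [], _, _, _ => rfl
  | [], P :: _, _, h', hf => absurd (List.append_eq_nil_iff.mp hf.symm).1 (h' P (by simp)).2.1
  | P :: _, [], h, _, hf => absurd (List.append_eq_nil_iff.mp hf).1 (h P (by simp)).2.1
  | P :: L, P' :: L', h, h', hf => by
    simp only [List.flatten_cons] at hf
    have hPP' : P = P' := by
      rcases List.prefix_or_prefix_of_prefix ⟨L.flatten, hf⟩ ⟨L'.flatten, rfl⟩ with hle | hle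
      · exact (h P (by simp)).eq_of_prefix (h' P' (by simp)) hle
      · exact ((h' P' (by simp)).eq_of_prefix (h P (by simp)) hle).symm
    subst hPP'
    rw [eq_of_flatten_eq_of_isEvenBlock (fun Q hQ => h Q (by simp [hQ]))
      (fun Q hQ => h' Q (by simp [hQ])) (List.append_cancel_left hf)]

theorem exists_isEvenBlock_decomposition (p : List Step) (hp : IsDyck p)
    (he : Even (termDesc p)) :
    ∃ L : List (List Step), L.length = evenGroundDescentCount p ∧
      (∀ P ∈ L, IsEvenBlock P) ∧ p = L.flatten := by
  by_cases hne : p = []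
  · subst hne
    exact ⟨[], evenGroundDescentCount_nil.symm, by simp, rfl⟩
  by_cases hodd : OddNonterminalGroundDescents p
  · have hP : IsEvenBlock p := ⟨hp, hne, he, hodd⟩
    exact ⟨[p], hP.evenGroundDescentCount_eq_one.symm, by simpa using hP, by simp⟩
  obtain ⟨q, m, r, hg, hr, hm⟩ : ∃ q m r, GroundDescent p q m r ∧ r ≠ [] ∧ ¬Odd m := by
    simpa [OddNonterminalGroundDescents] using hodd
  set a := q ++ List.replicate m D
  have hpa : p = a ++ r := hg.1
  have hane : a ≠ [] := by simp [a, Nat.one_le_iff_ne_zero.mp hg.2.1]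
  have hbal : a.count U = a.count D := by
    simp [a, List.count_append, List.count_replicate, hg.2.2.2.2]
  obtain ⟨ha, hr'⟩ := (hpa ▸ hp).of_append hbal
  have hta : termDesc a = m := termDesc_append_replicate hg.2.2.1 m
  have htr : termDesc r = termDesc p := by
    rw [hpa, termDesc_append_of_mem (List.mem_of_mem_head? (hr'.head?_eq hr))]
  obtain ⟨L₁, hL₁, hb₁, hf₁⟩ := exists_isEvenBlock_decomposition a ha
    (hta ▸ Nat.not_odd_iff_even.mp hm)
  obtain ⟨L₂, hL₂, hb₂, hf₂⟩ := exists_isEvenBlock_decomposition r hr' (htr ▸ he)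
  refine ⟨L₁ ++ L₂, ?_, by simpa [or_imp, forall_and] using ⟨hb₁, hb₂⟩,
    by rw [hpa, hf₁, hf₂, List.flatten_append]⟩
  rw [List.length_append, hL₁, hL₂, hpa, evenGroundDescentCount_append ha hane hr' hr]
termination_by p.length
decreasing_by
  all_goals
    have := hg.2.1
    have := List.length_pos_iff.mpr hr
    rw [hg.1]
    simp only [List.length_append, List.length_replicate]
    omega

theorem stmt14_general (n k : ℕ) (p : List Step)
    (hp : IsDyckN n p) (he : Even (termDesc p))
    (hc : evenGroundDescentCount p = k) :
    ∃! L : List (List Step), L.length = k ∧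
      (∀ P ∈ L, IsDyck P ∧ P ≠ [] ∧ Even (termDesc P) ∧
        OddNonterminalGroundDescents P) ∧
      p = L.flatten := by
  obtain ⟨L, hlen, hL, rfl⟩ := exists_isEvenBlock_decomposition p hp.1 he
  exact ⟨L, ⟨hlen.trans hc, hL, rfl⟩, fun L' ⟨_, hL', hf⟩ =>
    eq_of_flatten_eq_of_isEvenBlock hL' hL hf.symm⟩

/-- For `n ≥ 1`, a Dyck `n`-path with even terminal descent (of length ≥ 2) and exactly
`k ≥ 1` even-length descents to ground level decomposes uniquely into a concatenation of
`k` nonempty Dyck paths each with even terminal descent and all other ground descents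
odd. -/
theorem stmt14 (n k : ℕ) (hn : 1 ≤ n) (hk : 1 ≤ k) (p : List Step)
    (hp : IsDyckN n p) (he : Even (termDesc p)) (h2 : 2 ≤ termDesc p)
    (hc : evenGroundDescentCount p = k) :
    ∃! L : List (List Step), L.length = k ∧
      (∀ P ∈ L, IsDyck P ∧ P ≠ [] ∧ Even (termDesc P) ∧
        OddNonterminalGroundDescents P) ∧
      p = L.flatten :=
  stmt14_general n k p hp he hc
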